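/- arXiv:2512.07618 — 5 statements merged into one kernel-verified Lean document; each statement's English description precedes it below -/
import Mathlib

section
/- Let V_G and V_H be finite types, let w_G : V_G × V_G → ℝ be nonnegative, let w_H : V_H × V_H → ℝ be nonnegative and symmetric, let b be a positive natural number, and let α ≥ 1 be a real number. Suppose M_sol is a b-matching between V_G and V_H such that Obj_dup(M) ≤ α·Obj_dup(M_sol) for every b-matching M between V_G and V_H. Then Obj(M) ≤ 2α·Obj(M_sol) for every b-matching M between V_G and V_H. -/
open Finset

/-- `M` is a `b`-matching: every node of `V_G` belongs to at most `b` pairs of `M`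
and every node of `V_H` belongs to at most `b` pairs of `M`. -/
def IsBMatching {V_G V_H : Type*} [DecidableEq V_G] [DecidableEq V_H]
    (b : ℕ) (M : Finset (V_G × V_H)) : Prop :=
  (∀ u : V_G, (M.filter (fun e => e.1 = u)).card ≤ b) ∧
  (∀ p : V_H, (M.filter (fun e => e.2 = p)).card ≤ b)

/-- The duplicated objective. -/
noncomputable def ObjDup {V_G V_H : Type*}
    (w_G : V_G × V_G → ℝ) (w_H : V_H × V_H → ℝ) (M : Finset (V_G × V_H)) : ℝ :=
  ∑ e ∈ M, ∑ f ∈ M, w_G (e.1, f.1) * w_H (e.2, f.2)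

/-- The objective counting each edge pair once via an indicator. -/
noncomputable def Obj {V_G V_H : Type*} [Fintype V_G] [Fintype V_H]
    [DecidableEq V_G] [DecidableEq V_H]
    (w_G : V_G × V_G → ℝ) (w_H : V_H × V_H → ℝ) (M : Finset (V_G × V_H)) : ℝ :=
  ∑ u : V_G, ∑ v : V_G, ∑ p : V_H, ∑ q : V_H,
    w_G (u, v) * w_H (p, q) *
      (if ((u, p) ∈ M ∧ (v, q) ∈ M) ∨ ((u, q) ∈ M ∧ (v, p) ∈ M) then (1 : ℝ) else 0)

lemma objdup_eq {V_G V_H : Type*} [Fintype V_G] [Fintype V_H]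
    [DecidableEq V_G] [DecidableEq V_H]
    (w_G : V_G × V_G → ℝ) (w_H : V_H × V_H → ℝ) (M : Finset (V_G × V_H)) :
    ObjDup w_G w_H M = ∑ u : V_G, ∑ p : V_H, ∑ v : V_G, ∑ q : V_H,
      w_G (u, v) * w_H (p, q) *
        (if (u, p) ∈ M ∧ (v, q) ∈ M then (1 : ℝ) else 0) := by
  unfold ObjDup
  have h1 : ∀ g : V_G × V_H → ℝ, ∑ e ∈ M, g e = ∑ e : V_G × V_H, if e ∈ M then g e else 0 := by
    intro g
    rw [Finset.sum_ite_mem, Finset.univ_inter]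
  rw [h1]
  simp_rw [h1]
  rw [Fintype.sum_prod_type]
  refine Finset.sum_congr rfl fun u _ => Finset.sum_congr rfl fun p _ => ?_
  rw [Fintype.sum_prod_type]
  by_cases hup : (u, p) ∈ M
  · simp only [hup, if_true, true_and]
    refine Finset.sum_congr rfl fun v _ => Finset.sum_congr rfl fun q _ => ?_
    by_cases hvq : (v, q) ∈ M <;> simp [hvq]
  · simp [hup]

lemma obj_eq {V_G V_H : Type*} [Fintype V_G] [Fintype V_H]
    [DecidableEq V_G] [DecidableEq V_H]
    (w_G : V_G × V_G → ℝ) (w_H : V_H × V_H → ℝ) (N : Finset (V_G × V_H)) :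
    Obj w_G w_H N = ∑ u : V_G, ∑ p : V_H, ∑ v : V_G, ∑ q : V_H,
      w_G (u, v) * w_H (p, q) *
        (if ((u, p) ∈ N ∧ (v, q) ∈ N) ∨ ((u, q) ∈ N ∧ (v, p) ∈ N) then (1 : ℝ) else 0) := by
  unfold Obj
  exact Finset.sum_congr rfl fun u _ => Finset.sum_comm

theorem stmt_1 {V_G V_H : Type*} [Fintype V_G] [Fintype V_H]
    [DecidableEq V_G] [DecidableEq V_H]
    (w_G : V_G × V_G → ℝ) (w_H : V_H × V_H → ℝ)
    (hG : ∀ x, 0 ≤ w_G x) (hH : ∀ x, 0 ≤ w_H x)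
    (hsymm : ∀ p q : V_H, w_H (p, q) = w_H (q, p))
    (b : ℕ) (hb : 0 < b) (α : ℝ) (hα : 1 ≤ α)
    (M_sol : Finset (V_G × V_H)) (hsol : IsBMatching b M_sol)
    (happrox : ∀ M : Finset (V_G × V_H), IsBMatching b M →
      ObjDup w_G w_H M ≤ α * ObjDup w_G w_H M_sol) :
    ∀ M : Finset (V_G × V_H), IsBMatching b M →
      Obj w_G w_H M ≤ 2 * α * Obj w_G w_H M_sol := by
  intro M hM
  -- Step 1 : ObjDup M_sol ≤ Obj M_sol
  have hA : ObjDup w_G w_H M_sol ≤ Obj w_G w_H M_sol := by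
    rw [objdup_eq, obj_eq]
    refine Finset.sum_le_sum fun u _ => Finset.sum_le_sum fun p _ =>
      Finset.sum_le_sum fun v _ => Finset.sum_le_sum fun q _ => ?_
    have hw : (0:ℝ) ≤ w_G (u, v) * w_H (p, q) := mul_nonneg (hG _) (hH _)
    split_ifs with h1 h2
    · exact le_refl _
    · exact absurd (Or.inl h1) h2
    · simpa using hw
    · exact le_refl _
  -- Step 2 : Obj M ≤ 2 * ObjDup M
  have hB : Obj w_G w_H M ≤ 2 * ObjDup w_G w_H M := by
    rw [obj_eq, objdup_eq]
    have step : Obj w_G w_H M ≤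
        (∑ u : V_G, ∑ p : V_H, ∑ v : V_G, ∑ q : V_H,
          (w_G (u, v) * w_H (p, q) * (if (u, p) ∈ M ∧ (v, q) ∈ M then (1:ℝ) else 0) +
           w_G (u, v) * w_H (p, q) * (if (u, q) ∈ M ∧ (v, p) ∈ M then (1:ℝ) else 0))) := by
      rw [obj_eq]
      refine Finset.sum_le_sum fun u _ => Finset.sum_le_sum fun p _ =>
        Finset.sum_le_sum fun v _ => Finset.sum_le_sum fun q _ => ?_
      have hw : (0:ℝ) ≤ w_G (u, v) * w_H (p, q) := mul_nonneg (hG _) (hH _)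
      split_ifs with h1 h2 h3 <;> first | linarith | tauto
    rw [← obj_eq]
    refine step.trans (le_of_eq ?_)
    simp only [Finset.sum_add_distrib]
    have hsecond : (∑ u : V_G, ∑ p : V_H, ∑ v : V_G, ∑ q : V_H,
        w_G (u, v) * w_H (p, q) * (if (u, q) ∈ M ∧ (v, p) ∈ M then (1:ℝ) else 0)) =
        ∑ u : V_G, ∑ p : V_H, ∑ v : V_G, ∑ q : V_H,
        w_G (u, v) * w_H (p, q) * (if (u, p) ∈ M ∧ (v, q) ∈ M then (1:ℝ) else 0) := by
      refine Finset.sum_congr rfl fun u _ => ?_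
      -- swap p and q (positions 1 and 3 in the remaining triple sum)
      have key : ∀ F : V_H → V_G → V_H → ℝ,
          (∑ p : V_H, ∑ v : V_G, ∑ q : V_H, F p v q) =
          ∑ q : V_H, ∑ v : V_G, ∑ p : V_H, F p v q := by
        intro F
        rw [Finset.sum_comm]
        rw [show (∑ v : V_G, ∑ p : V_H, ∑ q : V_H, F p v q)
            = ∑ v : V_G, ∑ q : V_H, ∑ p : V_H, F p v q from
          Finset.sum_congr rfl fun v _ => Finset.sum_comm]
        rw [Finset.sum_comm]
      rw [key (fun p v q => w_G (u, v) * w_H (p, q) * (if (u, q) ∈ M ∧ (v, p) ∈ M then (1:ℝ) else 0))]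
      refine Finset.sum_congr rfl fun p _ => Finset.sum_congr rfl fun v _ =>
        Finset.sum_congr rfl fun q _ => ?_
      rw [hsymm q p]
    rw [hsecond]
    ring
  have hαpos : (0:ℝ) ≤ α := le_trans zero_le_one hα
  have h2 := happrox M hM
  calc Obj w_G w_H M ≤ 2 * ObjDup w_G w_H M := hB
    _ ≤ 2 * (α * ObjDup w_G w_H M_sol) := by linarith
    _ ≤ 2 * α * Obj w_G w_H M_sol := by nlinarith
end

section
/- Let (Ω, P) be a probability space, let V be a finite set, let (A_s)_{s∈V} be a family of measurable events that is pairwise independent (P(A_s ∩ A_{s'}) = P(A_s)·P(A_{s'}) for all s ≠ s'), and let v ∈ V. For ω ∈ Ω let S(ω) = {s ∈ V : ω ∈ A_s}. Then ∫_{A_v} 1/|S(ω)| dP(ω) ≥ P(A_v) / (∑_{s∈V} P(A_s) + 1). (Note that |S(ω)| ≥ 1 for ω ∈ A_v, so the integrand is well defined on A_v.) -/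
open MeasureTheory Finset
open scoped Classical

theorem stmt_2 {Ω : Type*} [MeasurableSpace Ω] (μ : Measure Ω)
    [IsProbabilityMeasure μ]
    {V : Type*} [Fintype V]
    (A : V → Set Ω) (hA : ∀ s, MeasurableSet (A s))
    (hind : ∀ s s' : V, s ≠ s' → μ (A s ∩ A s') = μ (A s) * μ (A s'))
    (v : V) :
    (μ (A v)).toReal / (∑ s : V, (μ (A s)).toReal + 1) ≤
      ∫ ω in A v, (1 : ℝ) / ((Finset.univ.filter (fun s : V => ω ∈ A s)).card) ∂μ := by
  set p : ℝ := (μ (A v)).toReal with hp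
  set c : ℝ := ∑ s : V, (μ (A s)).toReal + 1 with hc
  have hq : ∀ s : V, 0 ≤ (μ (A s)).toReal := fun s => ENNReal.toReal_nonneg
  have hsum : 0 ≤ ∑ s : V, (μ (A s)).toReal := Finset.sum_nonneg fun s _ => hq s
  have hcpos : (0:ℝ) < c := by rw [hc]; linarith
  set g : Ω → ℝ := fun ω => ((Finset.univ.filter (fun s : V => ω ∈ A s)).card : ℝ) with hgdef
  have hgeq : g = fun ω => ∑ s : V, Set.indicator (A s) (fun _ => (1:ℝ)) ω := by
    funext ω
    rw [hgdef]
    simp only [Finset.card_filter]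
    push_cast
    exact Finset.sum_congr rfl fun s _ => by simp [Set.indicator_apply]
  have hgm : Measurable g := by
    rw [hgeq]
    exact Finset.measurable_sum _ fun s _ => measurable_const.indicator (hA s)
  have hgint : Integrable g μ := by
    rw [hgeq]
    exact integrable_finset_sum _ fun s _ => (integrable_const (1:ℝ)).indicator (hA s)
  have hgnn : ∀ ω, 0 ≤ g ω := fun ω => by rw [hgdef]; positivity
  have h1gm : Measurable fun ω => 1 / g ω := measurable_const.div hgm
  have h1gbd : ∀ ω, 1 / g ω ≤ 1 := by
    intro ω
    rcases eq_or_lt_of_le (hgnn ω) with h | h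
    · rw [← h]; simp
    · rw [div_le_one h]
      have : (1:ℕ) ≤ (Finset.univ.filter (fun s : V => ω ∈ A s)).card := by
        by_contra hcon
        push_neg at hcon
        interval_cases h' : (Finset.univ.filter (fun s : V => ω ∈ A s)).card
        · rw [hgdef] at h; simp [h'] at h
      simpa [hgdef] using this
  have h1gint : Integrable (fun ω => 1 / g ω) (μ.restrict (A v)) := by
    refine (integrable_const (1:ℝ)).mono' h1gm.aestronglyMeasurable ?_
    filter_upwards with ω
    rw [Real.norm_eq_abs, abs_of_nonneg (by positivity)]
    exact h1gbd ω
  -- integral of g over A v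
  have hI : ∫ ω in A v, g ω ∂μ = ∑ s : V, (μ (A v ∩ A s)).toReal := by
    rw [hgeq, integral_finset_sum _
      (fun s _ => ((integrable_const (1:ℝ)).indicator (hA s)).restrict)]
    refine Finset.sum_congr rfl fun s _ => ?_
    rw [setIntegral_indicator (hA s), setIntegral_const, smul_eq_mul, mul_one]
    rfl
  -- bound on the integral of g
  have hIle : ∑ s : V, (μ (A v ∩ A s)).toReal ≤ p * c := by
    have hsplit : ∑ s : V, (μ (A v ∩ A s)).toReal
        = p + ∑ s ∈ Finset.univ.erase v, p * (μ (A s)).toReal := by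
      rw [← Finset.add_sum_erase _ _ (Finset.mem_univ v)]
      congr 1
      · rw [Set.inter_self]
      · refine Finset.sum_congr rfl fun s hs => ?_
        rw [hind v s (Finset.ne_of_mem_erase hs).symm, ENNReal.toReal_mul]
    rw [hsplit]
    have h1 : ∑ s ∈ Finset.univ.erase v, p * (μ (A s)).toReal
        ≤ ∑ s : V, p * (μ (A s)).toReal := by
      refine Finset.sum_le_sum_of_subset_of_nonneg (Finset.subset_univ _) ?_
      intro s _ _
      exact mul_nonneg ENNReal.toReal_nonneg (hq s)
    have h2 : ∑ s : V, p * (μ (A s)).toReal = p * ∑ s : V, (μ (A s)).toReal := by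
      rw [Finset.mul_sum]
    have : p * c = p * ∑ s : V, (μ (A s)).toReal + p := by rw [hc]; ring
    rw [this]
    linarith
  -- pointwise key inequality on A v
  have key : ∀ ω ∈ A v, 2/c - g ω/c^2 ≤ 1 / g ω := by
    intro ω hω
    have hg1 : (1:ℝ) ≤ g ω := by
      have hv : v ∈ Finset.univ.filter (fun s : V => ω ∈ A s) :=
        Finset.mem_filter.mpr ⟨Finset.mem_univ v, hω⟩
      have : 0 < (Finset.univ.filter (fun s : V => ω ∈ A s)).card :=
        Finset.card_pos.mpr ⟨v, hv⟩
      show (1:ℝ) ≤ ((Finset.univ.filter (fun s : V => ω ∈ A s)).card : ℝ)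
      exact_mod_cast this
    have hg0 : (0:ℝ) < g ω := lt_of_lt_of_le one_pos hg1
    rw [div_sub_div _ _ (ne_of_gt hcpos) (by positivity), div_le_div_iff₀ (by positivity) hg0]
    nlinarith [sq_nonneg (g ω - c), mul_nonneg hcpos.le (sq_nonneg (g ω - c))]
  -- integrate
  have hint1 : Integrable (fun ω => 2/c - g ω/c^2) (μ.restrict (A v)) :=
    (integrable_const _).sub (hgint.restrict.div_const _)
  have step1 : ∫ ω in A v, (2/c - g ω/c^2) ∂μ ≤ ∫ ω in A v, 1 / g ω ∂μ :=
    setIntegral_mono_on hint1 h1gint (hA v) key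
  have hLHS : ∫ ω in A v, (2/c - g ω/c^2) ∂μ = p * (2/c) - (∑ s : V, (μ (A v ∩ A s)).toReal) / c^2 := by
    rw [integral_sub (integrable_const _) (hgint.restrict.div_const _),
      setIntegral_const, integral_div, hI, smul_eq_mul]
    rfl
  -- final arithmetic
  have hfrac : p * c / c^2 = p / c := by
    field_simp
  have h3 : (∑ s : V, (μ (A v ∩ A s)).toReal) / c^2 ≤ p * c / c^2 := by
    apply div_le_div_of_nonneg_right hIle ?_ |>.trans_eq rfl
    positivity
  have hpnn : 0 ≤ p := ENNReal.toReal_nonneg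
  calc p / c = p * (2/c) - p * c / c^2 := by rw [hfrac]; ring
    _ ≤ p * (2/c) - (∑ s : V, (μ (A v ∩ A s)).toReal) / c^2 := by linarith
    _ = ∫ ω in A v, (2/c - g ω/c^2) ∂μ := hLHS.symm
    _ ≤ ∫ ω in A v, 1 / g ω ∂μ := step1
end

section
/- Let (Ω, P) be a probability space, let V and W be finite sets, let (A_s)_{s∈V} and (B_t)_{t∈W} be measurable events, and fix v ∈ V and w ∈ W. Assume that for every s ∈ V with s ≠ v and every t ∈ W with t ≠ w: P(A_s ∩ A_v ∩ B_w) = P(A_s)·P(A_v ∩ B_w), P(B_t ∩ A_v ∩ B_w) = P(B_t)·P(A_v ∩ B_w), and P(A_s ∩ B_t ∩ A_v ∩ B_w) = P(A_s)·P(B_t)·P(A_v ∩ B_w). For ω ∈ Ω let S(ω) = {s ∈ V : ω ∈ A_s} and T(ω) = {t ∈ W : ω ∈ B_t}. Then ∫_{A_v ∩ B_w} 1/(|S(ω)|·|T(ω)|) dP(ω) ≥ P(A_v ∩ B_w) / ((∑_{s∈V} P(A_s) + 1)·(∑_{t∈W} P(B_t) + 1)). -/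
open MeasureTheory Finset
open scoped Classical ENNReal

/-- Cauchy–Schwarz / paley–zygmund style bound: if `1 ≤ F ≤ ∞` avoided on `E` and
`∫_E F ≤ C · μ E`, then `μ E ≤ C · ∫_E F⁻¹`. -/
lemma aux_CS {Ω : Type*} [MeasurableSpace Ω] (μ : Measure Ω) [IsProbabilityMeasure μ]
    {E : Set Ω} (hE : MeasurableSet E) (F : Ω → ℝ≥0∞) (mF : Measurable F)
    (hF1 : ∀ ω ∈ E, 1 ≤ F ω) (hFtop : ∀ ω ∈ E, F ω ≠ ∞) {C : ℝ≥0∞}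
    (hFC : ∫⁻ ω in E, F ω ∂μ ≤ C * μ E) :
    μ E ≤ C * ∫⁻ ω in E, (F ω)⁻¹ ∂μ := by
  by_cases h0 : μ E = 0
  · rw [h0]; exact zero_le
  have hμtop : μ E ≠ ∞ := measure_ne_top μ E
  set I : ℝ≥0∞ := ∫⁻ ω in E, (F ω)⁻¹ ∂μ with hI
  have hpq : Real.HolderConjugate 2 2 :=
    Real.holderConjugate_iff_eq_conjExponent (by norm_num) |>.mpr (by norm_num)
  have mf : Measurable fun ω => (F ω) ^ (1/2 : ℝ) := mF.pow_const _
  have mg : Measurable fun ω => (F ω)⁻¹ ^ (1/2 : ℝ) := mF.inv.pow_const _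
  have CS := ENNReal.lintegral_mul_le_Lp_mul_Lq (μ.restrict E) hpq
    mf.aemeasurable mg.aemeasurable
  have h1 : ∫⁻ ω, ((fun ω => (F ω) ^ (1/2 : ℝ)) * fun ω => (F ω)⁻¹ ^ (1/2 : ℝ)) ω
      ∂(μ.restrict E) = μ E := by
    have : ∀ᵐ ω ∂(μ.restrict E),
        ((fun ω => (F ω) ^ (1/2 : ℝ)) * fun ω => (F ω)⁻¹ ^ (1/2 : ℝ)) ω = 1 := by
      filter_upwards [ae_restrict_mem hE] with ω hω
      have hne : F ω ≠ 0 := by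
        intro h; exact absurd (hF1 ω hω) (by simp [h])
      simp only [Pi.mul_apply]
      rw [← ENNReal.mul_rpow_of_nonneg _ _ (by norm_num : (0:ℝ) ≤ 1/2),
        ENNReal.mul_inv_cancel hne (hFtop ω hω), ENNReal.one_rpow]
    rw [lintegral_congr_ae this, lintegral_one, Measure.restrict_apply_univ]
  have h2 : ∫⁻ ω, ((F ω) ^ (1/2 : ℝ)) ^ (2:ℝ) ∂(μ.restrict E) = ∫⁻ ω in E, F ω ∂μ := by
    refine lintegral_congr fun ω => ?_
    rw [← ENNReal.rpow_mul]; norm_num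
  have h3 : ∫⁻ ω, ((F ω)⁻¹ ^ (1/2 : ℝ)) ^ (2:ℝ) ∂(μ.restrict E) = I := by
    refine lintegral_congr fun ω => ?_
    rw [← ENNReal.rpow_mul]; norm_num
  rw [h1, h2, h3] at CS
  -- μ E ≤ (∫_E F)^(1/2) * I^(1/2) ≤ (C * μ E)^(1/2) * I^(1/2)
  have CS2 : μ E ≤ (C * μ E) ^ (1/2:ℝ) * I ^ (1/2:ℝ) :=
    le_trans CS (mul_le_mul_left (ENNReal.rpow_le_rpow hFC (by norm_num)) _)
  have hsq : μ E * μ E ≤ μ E * (C * I) := by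
    calc μ E * μ E ≤ ((C * μ E) ^ (1/2:ℝ) * I ^ (1/2:ℝ)) *
        ((C * μ E) ^ (1/2:ℝ) * I ^ (1/2:ℝ)) := mul_le_mul' CS2 CS2
      _ = ((C * μ E) ^ (1/2:ℝ) * (C * μ E) ^ (1/2:ℝ)) * (I ^ (1/2:ℝ) * I ^ (1/2:ℝ)) := by
          ring
      _ = (C * μ E) * I := by
          rw [← ENNReal.rpow_add_of_nonneg _ _ (by norm_num) (by norm_num),
            ← ENNReal.rpow_add_of_nonneg _ _ (by norm_num) (by norm_num)]
          norm_num
      _ = μ E * (C * I) := by ring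
  exact (ENNReal.mul_le_mul_iff_right h0 hμtop).mp hsq

theorem stmt_3 {Ω : Type*} [MeasurableSpace Ω] (μ : Measure Ω)
    [IsProbabilityMeasure μ]
    {V W : Type*} [Fintype V] [Fintype W]
    (A : V → Set Ω) (B : W → Set Ω)
    (hA : ∀ s, MeasurableSet (A s)) (hB : ∀ t, MeasurableSet (B t))
    (v : V) (w : W)
    (hindA : ∀ s : V, s ≠ v →
      μ (A s ∩ (A v ∩ B w)) = μ (A s) * μ (A v ∩ B w))
    (hindB : ∀ t : W, t ≠ w →
      μ (B t ∩ (A v ∩ B w)) = μ (B t) * μ (A v ∩ B w))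
    (hindAB : ∀ s : V, s ≠ v → ∀ t : W, t ≠ w →
      μ (A s ∩ B t ∩ (A v ∩ B w)) = μ (A s) * μ (B t) * μ (A v ∩ B w)) :
    (μ (A v ∩ B w)).toReal /
        ((∑ s : V, (μ (A s)).toReal + 1) * (∑ t : W, (μ (B t)).toReal + 1)) ≤
      ∫ ω in A v ∩ B w,
        (1 : ℝ) / (((Finset.univ.filter (fun s : V => ω ∈ A s)).card : ℝ) *
          ((Finset.univ.filter (fun t : W => ω ∈ B t)).card : ℝ)) ∂μ := by
  classical
  set E : Set Ω := A v ∩ B w with hEdef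
  have hE : MeasurableSet E := (hA v).inter (hB w)
  have hμtop : μ E ≠ ∞ := measure_ne_top μ E
  set N : Ω → ℕ := fun ω => (Finset.univ.filter fun s : V => ω ∈ A s).card with hNdef
  set M : Ω → ℕ := fun ω => (Finset.univ.filter fun t : W => ω ∈ B t).card with hMdef
  have mN : Measurable N := by
    rw [hNdef]; simp only [Finset.card_filter]
    exact Finset.measurable_sum _ fun s _ =>
      Measurable.ite (hA s) measurable_const measurable_const
  have mM : Measurable M := by
    rw [hMdef]; simp only [Finset.card_filter]
    exact Finset.measurable_sum _ fun t _ =>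
      Measurable.ite (hB t) measurable_const measurable_const
  set F : Ω → ℝ≥0∞ := fun ω => (N ω : ℝ≥0∞) * (M ω : ℝ≥0∞) with hFdef
  have mF : Measurable F :=
    Measurable.mul (f := fun ω => (N ω : ℝ≥0∞)) (g := fun ω => (M ω : ℝ≥0∞))
      (measurable_from_nat.comp mN) (measurable_from_nat.comp mM)
  have hN1 : ∀ ω ∈ E, 1 ≤ N ω := fun ω hω =>
    Finset.card_pos.mpr ⟨v, Finset.mem_filter.mpr ⟨Finset.mem_univ v, hω.1⟩⟩
  have hM1 : ∀ ω ∈ E, 1 ≤ M ω := fun ω hω =>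
    Finset.card_pos.mpr ⟨w, Finset.mem_filter.mpr ⟨Finset.mem_univ w, hω.2⟩⟩
  have hF1 : ∀ ω ∈ E, (1:ℝ≥0∞) ≤ F ω := by
    intro ω hω
    have h1 := hN1 ω hω; have h2 := hM1 ω hω
    calc (1:ℝ≥0∞) = 1 * 1 := (one_mul 1).symm
      _ ≤ (N ω : ℝ≥0∞) * (M ω : ℝ≥0∞) :=
        mul_le_mul' (by exact_mod_cast h1) (by exact_mod_cast h2)
  have hFtop : ∀ ω ∈ E, F ω ≠ ∞ := fun ω _ =>
    ENNReal.mul_ne_top (ENNReal.natCast_ne_top _) (ENNReal.natCast_ne_top _)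
  -- the upper bound on ∫_E F
  set a : V → ℝ≥0∞ := fun s => if s = v then 1 else μ (A s) with hadef
  set b : W → ℝ≥0∞ := fun t => if t = w then 1 else μ (B t) with hbdef
  have hkey : ∀ (s : V) (t : W), μ (A s ∩ B t ∩ E) = a s * b t * μ E := by
    intro s t
    simp only [hadef, hbdef]
    rcases eq_or_ne s v with hs | hs <;> rcases eq_or_ne t w with ht | ht
    · have h1 : A s ∩ B t ∩ E = E := by
        rw [hs, ht, hEdef]; ext x; simp only [Set.mem_inter_iff]; tauto
      rw [h1, if_pos hs, if_pos ht, one_mul, one_mul]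
    · have h1 : A s ∩ B t ∩ E = B t ∩ E := by
        rw [hs, hEdef]; ext x; simp only [Set.mem_inter_iff]; tauto
      rw [h1, hindB t ht, if_pos hs, if_neg ht, one_mul]
    · have h1 : A s ∩ B t ∩ E = A s ∩ E := by
        rw [ht, hEdef]; ext x; simp only [Set.mem_inter_iff]; tauto
      rw [h1, hindA s hs, if_neg hs, if_pos ht, mul_one]
    · rw [hindAB s hs t ht, if_neg hs, if_neg ht]
  have hNcast : ∀ ω, ((N ω : ℝ≥0∞)) = ∑ s : V, Set.indicator (A s) 1 ω := by
    intro ω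
    rw [hNdef]; simp only [Finset.card_filter]; push_cast
    exact Finset.sum_congr rfl fun s _ => by
      by_cases h : ω ∈ A s <;> simp [Set.indicator, h]
  have hMcast : ∀ ω, ((M ω : ℝ≥0∞)) = ∑ t : W, Set.indicator (B t) 1 ω := by
    intro ω
    rw [hMdef]; simp only [Finset.card_filter]; push_cast
    exact Finset.sum_congr rfl fun t _ => by
      by_cases h : ω ∈ B t <;> simp [Set.indicator, h]
  have hFexp : ∀ ω, F ω = ∑ s : V, ∑ t : W, Set.indicator (A s ∩ B t) 1 ω := by
    intro ω
    rw [hFdef]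
    simp only [hNcast, hMcast]
    rw [Finset.sum_mul_sum]
    refine Finset.sum_congr rfl fun s _ => Finset.sum_congr rfl fun t _ => ?_
    by_cases h1 : ω ∈ A s <;> by_cases h2 : ω ∈ B t <;>
      simp [Set.indicator, h1, h2]
  have hFint : ∫⁻ ω in E, F ω ∂μ = ∑ s : V, ∑ t : W, μ (A s ∩ B t ∩ E) := by
    have hms : ∀ (s : V) (t : W),
        Measurable (fun ω => Set.indicator (A s ∩ B t) (1 : Ω → ℝ≥0∞) ω) :=
      fun s t => measurable_const.indicator ((hA s).inter (hB t))
    calc ∫⁻ ω in E, F ω ∂μ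
        = ∫⁻ ω in E, ∑ s : V, ∑ t : W, Set.indicator (A s ∩ B t) 1 ω ∂μ :=
          lintegral_congr fun ω => hFexp ω
      _ = ∑ s : V, ∫⁻ ω in E, ∑ t : W, Set.indicator (A s ∩ B t) 1 ω ∂μ :=
          lintegral_finset_sum _ fun s _ => Finset.measurable_sum _ fun t _ => hms s t
      _ = ∑ s : V, ∑ t : W, ∫⁻ ω in E, Set.indicator (A s ∩ B t) 1 ω ∂μ :=
          Finset.sum_congr rfl fun s _ => lintegral_finset_sum _ fun t _ => hms s t
      _ = ∑ s : V, ∑ t : W, μ (A s ∩ B t ∩ E) :=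
          Finset.sum_congr rfl fun s _ => Finset.sum_congr rfl fun t _ => by
            rw [lintegral_indicator_one ((hA s).inter (hB t)),
              Measure.restrict_apply ((hA s).inter (hB t))]
  have hasum : ∑ s : V, a s ≤ ∑ s : V, μ (A s) + 1 := by
    calc ∑ s : V, a s ≤ ∑ s : V, (μ (A s) + if s = v then 1 else 0) := by
          refine Finset.sum_le_sum fun s _ => ?_
          rw [hadef]
          by_cases h : s = v <;> simp [h]
      _ = ∑ s : V, μ (A s) + 1 := by
          rw [Finset.sum_add_distrib, Finset.sum_ite_eq' Finset.univ v fun _ => (1:ℝ≥0∞)]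
          simp
  have hbsum : ∑ t : W, b t ≤ ∑ t : W, μ (B t) + 1 := by
    calc ∑ t : W, b t ≤ ∑ t : W, (μ (B t) + if t = w then 1 else 0) := by
          refine Finset.sum_le_sum fun t _ => ?_
          rw [hbdef]
          by_cases h : t = w <;> simp [h]
      _ = ∑ t : W, μ (B t) + 1 := by
          rw [Finset.sum_add_distrib, Finset.sum_ite_eq' Finset.univ w fun _ => (1:ℝ≥0∞)]
          simp
  set C : ℝ≥0∞ := (∑ s : V, μ (A s) + 1) * (∑ t : W, μ (B t) + 1) with hCdef
  have hFC : ∫⁻ ω in E, F ω ∂μ ≤ C * μ E := by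
    rw [hFint]
    have : ∑ s : V, ∑ t : W, μ (A s ∩ B t ∩ E) = (∑ s : V, a s) * (∑ t : W, b t) * μ E := by
      simp_rw [hkey]
      rw [Finset.sum_mul_sum, Finset.sum_mul]
      exact Finset.sum_congr rfl fun s _ => by rw [Finset.sum_mul]
    rw [this, hCdef]
    exact mul_le_mul_left (mul_le_mul' hasum hbsum) _
  have key := aux_CS μ hE F mF hF1 hFtop hFC
  set I : ℝ≥0∞ := ∫⁻ ω in E, (F ω)⁻¹ ∂μ with hI
  -- finiteness facts
  have hsumA_top : (∑ s : V, μ (A s)) ≠ ∞ :=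
    ENNReal.sum_ne_top.mpr fun s _ => measure_ne_top μ _
  have hsumB_top : (∑ t : W, μ (B t)) ≠ ∞ :=
    ENNReal.sum_ne_top.mpr fun t _ => measure_ne_top μ _
  have hCtop : C ≠ ∞ := by
    rw [hCdef]
    exact ENNReal.mul_ne_top (by simp [ENNReal.add_ne_top, hsumA_top])
      (by simp [ENNReal.add_ne_top, hsumB_top])
  have hItop : I ≠ ∞ := by
    have : I ≤ μ E := by
      rw [hI]
      calc ∫⁻ ω in E, (F ω)⁻¹ ∂μ ≤ ∫⁻ _ in E, 1 ∂μ := by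
            refine setLIntegral_mono measurable_const fun ω hω => ?_
            exact ENNReal.inv_le_one.mpr (hF1 ω hω)
        _ = μ E := by rw [setLIntegral_one]
    exact ne_top_of_le_ne_top hμtop this
  -- relate the Bochner integral to I
  have hInt : ∫ ω in E,
      (1 : ℝ) / (((Finset.univ.filter (fun s : V => ω ∈ A s)).card : ℝ) *
        ((Finset.univ.filter (fun t : W => ω ∈ B t)).card : ℝ)) ∂μ = I.toReal := by
    rw [hI, ← integral_toReal (f := fun ω => (F ω)⁻¹) (mF.inv.aemeasurable) ?_]
    · refine integral_congr_ae (Filter.Eventually.of_forall fun ω => ?_)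
      rw [hFdef]
      simp [ENNReal.toReal_inv, one_div, hNdef, hMdef]
    · filter_upwards [ae_restrict_mem hE] with ω hω
      exact ENNReal.inv_lt_top.mpr (lt_of_lt_of_le zero_lt_one (hF1 ω hω))
  rw [hInt]
  -- pass to reals
  have hreal : (μ E).toReal ≤ C.toReal * I.toReal := by
    rw [← ENNReal.toReal_mul]
    exact ENNReal.toReal_le_toReal hμtop (ENNReal.mul_ne_top hCtop hItop) |>.mpr key
  have hCreal : C.toReal = (∑ s : V, (μ (A s)).toReal + 1) * (∑ t : W, (μ (B t)).toReal + 1) := by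
    rw [hCdef, ENNReal.toReal_mul, ENNReal.toReal_add hsumA_top (by norm_num),
      ENNReal.toReal_add hsumB_top (by norm_num), ENNReal.toReal_sum fun s _ => measure_ne_top μ _,
      ENNReal.toReal_sum fun t _ => measure_ne_top μ _]
    norm_num
  have hpos : 0 < (∑ s : V, (μ (A s)).toReal + 1) * (∑ t : W, (μ (B t)).toReal + 1) := by
    have h1 : (0:ℝ) ≤ ∑ s : V, (μ (A s)).toReal :=
      Finset.sum_nonneg fun s _ => ENNReal.toReal_nonneg
    have h2 : (0:ℝ) ≤ ∑ t : W, (μ (B t)).toReal :=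
      Finset.sum_nonneg fun t _ => ENNReal.toReal_nonneg
    positivity
  rw [div_le_iff₀ hpos]
  calc (μ E).toReal ≤ C.toReal * I.toReal := hreal
    _ = I.toReal * ((∑ s : V, (μ (A s)).toReal + 1) * (∑ t : W, (μ (B t)).toReal + 1)) := by
        rw [hCreal]; ring
end

section
/- Let V_G and V_H be finite types, let w_G : V_G × V_G → ℝ and w_H : V_H × V_H → ℝ be nonnegative, let L : V_G → Finset V_H and W : V_H → Finset V_H, and let x : V_G × V_H → ℝ and y : V_G × V_H × V_G × V_H → ℝ be nonnegative. Assume: (i) for every p ∈ V_H, every q' ∈ W(p) and every q ∉ W(p), w_H(p,q') ≥ w_H(p,q); (ii) ∑_{q∈V_H} y(u,p,v,q) ≤ x(u,p) for all u, v ∈ V_G and p ∈ V_H; (iii) y(u,p,v,q) = 0 whenever q ∉ L(v); and (iv) L(v) ∩ W(p) ≠ ∅ for all v ∈ V_G and p ∈ V_H. Then ∑_{u,v∈V_G} ∑_{p∈V_H} ∑_{q∈V_H, q∉W(p)} w_G(u,v)·w_H(p,q)·y(u,p,v,q) ≤ ∑_{u,v∈V_G} w_G(u,v)·∑_{p∈V_H}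 x(u,p)·min_{q ∈ L(v)∩W(p)} w_H(p,q). -/
open Finset

theorem stmt_7 {V_G V_H : Type*} [Fintype V_G] [Fintype V_H]
    [DecidableEq V_G] [DecidableEq V_H]
    (w_G : V_G × V_G → ℝ) (w_H : V_H × V_H → ℝ)
    (hwG : ∀ e, 0 ≤ w_G e) (hwH : ∀ e, 0 ≤ w_H e)
    (L : V_G → Finset V_H) (W : V_H → Finset V_H)
    (x : V_G × V_H → ℝ) (y : V_G × V_H × V_G × V_H → ℝ)
    (hx : ∀ e, 0 ≤ x e) (hy : ∀ e, 0 ≤ y e)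
    (hheavy : ∀ p : V_H, ∀ q' ∈ W p, ∀ q ∉ W p, w_H (p, q) ≤ w_H (p, q'))
    (hmarg : ∀ (u v : V_G) (p : V_H), ∑ q : V_H, y (u, p, v, q) ≤ x (u, p))
    (hlist : ∀ (u v : V_G) (p q : V_H), q ∉ L v → y (u, p, v, q) = 0)
    (hne : ∀ (v : V_G) (p : V_H), (L v ∩ W p).Nonempty) :
    ∑ u : V_G, ∑ v : V_G, ∑ p : V_H, ∑ q ∈ (W p)ᶜ,
        w_G (u, v) * w_H (p, q) * y (u, p, v, q) ≤
      ∑ u : V_G, ∑ v : V_G, w_G (u, v) *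
        ∑ p : V_H, x (u, p) * (L v ∩ W p).inf' (hne v p) (fun q => w_H (p, q)) := by
  have key : ∀ u v p, ∑ q ∈ (W p)ᶜ, w_H (p, q) * y (u, p, v, q) ≤
      x (u, p) * (L v ∩ W p).inf' (hne v p) (fun q => w_H (p, q)) := by
    intro u v p
    set m := (L v ∩ W p).inf' (hne v p) (fun q => w_H (p, q)) with hm
    have hm0 : 0 ≤ m := by
      obtain ⟨q0, hq0, hq0e⟩ := (L v ∩ W p).exists_mem_eq_inf' (hne v p) (fun q => w_H (p, q))
      rw [hm, hq0e]; exact hwH _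
    calc ∑ q ∈ (W p)ᶜ, w_H (p, q) * y (u, p, v, q)
        ≤ ∑ q ∈ (W p)ᶜ, m * y (u, p, v, q) := by
          apply Finset.sum_le_sum
          intro q hq
          rw [Finset.mem_compl] at hq
          by_cases hqL : q ∈ L v
          · refine mul_le_mul_of_nonneg_right ?_ (hy _)
            apply Finset.le_inf'
            intro q' hq'
            rw [Finset.mem_inter] at hq'
            exact hheavy p q' hq'.2 q hq
          · rw [hlist u v p q hqL]; simp
      _ = m * ∑ q ∈ (W p)ᶜ, y (u, p, v, q) := by rw [Finset.mul_sum]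
      _ ≤ m * ∑ q : V_H, y (u, p, v, q) := by
          refine mul_le_mul_of_nonneg_left ?_ hm0
          exact Finset.sum_le_sum_of_subset_of_nonneg (Finset.subset_univ _)
            (fun q _ _ => hy _)
      _ ≤ m * x (u, p) := mul_le_mul_of_nonneg_left (hmarg u v p) hm0
      _ = x (u, p) * m := mul_comm _ _
  refine Finset.sum_le_sum fun u _ => Finset.sum_le_sum fun v _ => ?_
  rw [Finset.mul_sum]
  refine Finset.sum_le_sum fun p _ => ?_
  calc ∑ q ∈ (W p)ᶜ, w_G (u, v) * w_H (p, q) * y (u, p, v, q)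
      = w_G (u, v) * ∑ q ∈ (W p)ᶜ, w_H (p, q) * y (u, p, v, q) := by
        rw [Finset.mul_sum]; simp [mul_assoc]
    _ ≤ w_G (u, v) * (x (u, p) * (L v ∩ W p).inf' (hne v p) (fun q => w_H (p, q))) :=
        mul_le_mul_of_nonneg_left (key u v p) (hwG _)
end

section
/- For every real number x with 0 ≤ x ≤ 1 and all natural numbers b, n with b ≥ 1 and 2b ≤ n, one has (1 − (1 − x/(2b))^b)·(1 − (1 − 2/n)^b) ≥ (1 − 1/e)²·(b·x/n), where e is Euler's number. -/
lemma key_round (t : ℝ) (ht0 : 0 ≤ t) (ht1 : t ≤ 1) (b : ℕ) (hb : 1 ≤ b) :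
    (1 - 1 / Real.exp 1) * t ≤ 1 - (1 - t / b) ^ b := by
  have hbR : (1 : ℝ) ≤ (b : ℝ) := by exact_mod_cast hb
  have hbpos : (0 : ℝ) < b := lt_of_lt_of_le one_pos hbR
  have htb : t / b ≤ 1 := by
    rw [div_le_one hbpos]; linarith
  have h0 : (0 : ℝ) ≤ 1 - t / b := by linarith
  have h1 : (1 - t / b : ℝ) ^ b ≤ Real.exp (-t) := by
    have hle : (1 - t / b : ℝ) ≤ Real.exp (-(t / b)) := by
      have := Real.add_one_le_exp (-(t / b))
      linarith
    calc (1 - t / b : ℝ) ^ b ≤ (Real.exp (-(t / b))) ^ b :=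
          pow_le_pow_left₀ h0 hle b
      _ = Real.exp (b * (-(t / b))) := (Real.exp_nat_mul _ b).symm
      _ = Real.exp (-t) := by
          congr 1
          field_simp
  have h2 : Real.exp (-t) ≤ 1 - (1 - 1 / Real.exp 1) * t := by
    have hc := convexOn_exp.2 (Set.mem_univ (-1 : ℝ)) (Set.mem_univ (0 : ℝ))
      (by linarith : (0:ℝ) ≤ t) (by linarith : (0:ℝ) ≤ 1 - t) (by ring)
    simp only [smul_eq_mul, mul_neg, mul_one, mul_zero, add_zero, Real.exp_zero] at hc
    rw [Real.exp_neg, Real.exp_neg] at hc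
    rw [Real.exp_neg, one_div]
    linarith
  nlinarith [h1, h2]

theorem stmt_11 (x : ℝ) (hx0 : 0 ≤ x) (hx1 : x ≤ 1) (b n : ℕ) (hb : 1 ≤ b)
    (hbn : 2 * b ≤ n) :
    (1 - 1 / Real.exp 1) ^ 2 * (b * x / n) ≤
      (1 - (1 - x / (2 * b)) ^ b) * (1 - (1 - 2 / (n : ℝ)) ^ b) := by
  have hbR : (1 : ℝ) ≤ (b : ℝ) := by exact_mod_cast hb
  have hbpos : (0 : ℝ) < b := lt_of_lt_of_le one_pos hbR
  have hnpos : (0 : ℝ) < n := by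
    have : (2 * b : ℝ) ≤ n := by exact_mod_cast hbn
    linarith
  have he : (0 : ℝ) ≤ 1 - 1 / Real.exp 1 := by
    have : (1 : ℝ) ≤ Real.exp 1 := by
      have := Real.add_one_le_exp (1 : ℝ); linarith
    have h1 : 1 / Real.exp 1 ≤ 1 := by
      rw [div_le_one (by positivity)]; exact this
    linarith
  -- first factor with t = x/2
  have hA := key_round (x / 2) (by linarith) (by linarith) b hb
  have hAeq : x / 2 / (b : ℝ) = x / (2 * b) := by
    field_simp
  rw [hAeq] at hA
  -- second factor with t = 2b/n
  have h2bn : (2 * b : ℝ) ≤ n := by exact_mod_cast hbn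
  have hB := key_round (2 * b / n) (by positivity)
    (by rw [div_le_one hnpos]; exact h2bn) b hb
  have hBeq : 2 * (b : ℝ) / n / b = 2 / n := by
    field_simp
  rw [hBeq] at hB
  have hnonnegA : 0 ≤ (1 - 1 / Real.exp 1) * (x / 2) := by positivity
  have hnonnegB : 0 ≤ (1 - 1 / Real.exp 1) * (2 * b / n) := by positivity
  calc (1 - 1 / Real.exp 1) ^ 2 * (b * x / n)
      = ((1 - 1 / Real.exp 1) * (x / 2)) * ((1 - 1 / Real.exp 1) * (2 * b / n)) := by
        generalize Real.exp 1 = e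
        field_simp
    _ ≤ (1 - (1 - x / (2 * b)) ^ b) * (1 - (1 - 2 / (n : ℝ)) ^ b) :=
        mul_le_mul hA hB hnonnegB (by linarith [hA, hnonnegA])
end
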